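/- Let x* be a feasible point of (NLP) with Λ(x*) ≠ ∅. If the rank of the Jacobian matrix J(x) is constant for all x in a neighborhood of x*, then for every d ∈ S(x*) the quadratic form dᵀ∇²ₓₓL(x*,λ,μ)d does not depend on the Lagrange multiplier: for all (λ,μ), (λ',μ') ∈ Λ(x*) and all d ∈ S(x*), dᵀ∇²ₓₓL(x*,λ,μ)d = dᵀ∇²ₓₓL(x*,λ',μ')d. -/

import Mathlib

open scoped BigOperators Pointwise
open Matrix

attribute [local instance] Classical.propDecidable

noncomputable section

/-- The gradient vector of `φ` at `x` (the vector of partial derivatives). -/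
def gradVec {n : ℕ} (φ : (Fin n → ℝ) → ℝ) (x : Fin n → ℝ) : Fin n → ℝ :=
  fun k => fderiv ℝ φ x (Pi.single k 1)

/-- The quadratic form `d ↦ dᵀ ∇²φ(x) d` of the Hessian of `φ` at `x`. -/
def hessQ {n : ℕ} (φ : (Fin n → ℝ) → ℝ) (x d : Fin n → ℝ) : ℝ :=
  iteratedFDeriv ℝ 2 φ x ![d, d]

/-- Feasibility for the problem (NLP). -/
def Feas {n m p : ℕ} (h : Fin m → (Fin n → ℝ) → ℝ) (g : Fin p → (Fin n → ℝ) → ℝ)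
    (x : Fin n → ℝ) : Prop :=
  (∀ i, h i x = 0) ∧ ∀ j, g j x ≤ 0

/-- The Lagrangian of (NLP). -/
def Lagr {n m p : ℕ} (f : (Fin n → ℝ) → ℝ) (h : Fin m → (Fin n → ℝ) → ℝ)
    (g : Fin p → (Fin n → ℝ) → ℝ) (lam : Fin m → ℝ) (mu : Fin p → ℝ) (x : Fin n → ℝ) : ℝ :=
  f x + ∑ i, lam i * h i x + ∑ j, mu j * g j x

/-- `(lam, mu)` is a Lagrange multiplier at `xs`, i.e. `(lam, mu) ∈ Λ(xs)`. -/
def IsLagMult {n m p : ℕ} (f : (Fin n → ℝ) → ℝ) (h : Fin m → (Fin n → ℝ) → ℝ)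
    (g : Fin p → (Fin n → ℝ) → ℝ) (xs : Fin n → ℝ) (lam : Fin m → ℝ) (mu : Fin p → ℝ) : Prop :=
  (∀ j, 0 ≤ mu j) ∧ fderiv ℝ (Lagr f h g lam mu) xs = 0 ∧ ∀ j, mu j * g j xs = 0

/-- The Mangasarian-Fromovitz constraint qualification at `xs`. -/
def MFCQ {n m p : ℕ} (h : Fin m → (Fin n → ℝ) → ℝ) (g : Fin p → (Fin n → ℝ) → ℝ)
    (xs : Fin n → ℝ) : Prop :=
  LinearIndependent ℝ (fun i : Fin m => fderiv ℝ (h i) xs) ∧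
  ∃ d : Fin n → ℝ, (∀ i, fderiv ℝ (h i) xs d = 0) ∧
    ∀ j, g j xs = 0 → fderiv ℝ (g j) xs d < 0

/-- Membership in the critical cone `C(xs)`. -/
def critCone {n m p : ℕ} (f : (Fin n → ℝ) → ℝ) (h : Fin m → (Fin n → ℝ) → ℝ)
    (g : Fin p → (Fin n → ℝ) → ℝ) (xs d : Fin n → ℝ) : Prop :=
  fderiv ℝ f xs d = 0 ∧ (∀ i, fderiv ℝ (h i) xs d = 0) ∧
    ∀ j, g j xs = 0 → fderiv ℝ (g j) xs d ≤ 0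

/-- Membership in the critical subspace `S(xs)`. -/
def critSub {n m p : ℕ} (h : Fin m → (Fin n → ℝ) → ℝ) (g : Fin p → (Fin n → ℝ) → ℝ)
    (xs d : Fin n → ℝ) : Prop :=
  (∀ i, fderiv ℝ (h i) xs d = 0) ∧ ∀ j, g j xs = 0 → fderiv ℝ (g j) xs d = 0

/-- The Jacobian matrix `J(x)` of equality and active inequality constraints
(activity taken at the base point `xs`). -/
def Jac {n m p : ℕ} (h : Fin m → (Fin n → ℝ) → ℝ) (g : Fin p → (Fin n → ℝ) → ℝ)
    (xs x : Fin n → ℝ) : Matrix (Fin m ⊕ {j : Fin p // g j xs = 0}) (Fin n) ℝ :=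
  Matrix.of fun i k =>
    Sum.elim (fun i' => fderiv ℝ (h i') x (Pi.single k 1))
      (fun j' => fderiv ℝ (g j'.1) x (Pi.single k 1)) i

/-- A first-order cone: the (direct) sum of a linear subspace and a ray. -/
def IsFirstOrderCone {n : ℕ} (K : Set (Fin n → ℝ)) : Prop :=
  ∃ (W : Submodule ℝ (Fin n → ℝ)) (d0 : Fin n → ℝ),
    K = {x | ∃ w ∈ W, ∃ r : ℝ, 0 ≤ r ∧ x = w + r • d0}

/-- The rank of a family of vectors: the dimension of its linear span. -/
def famRank {ι : Type*} {n : ℕ} (v : ι → (Fin n → ℝ)) : ℕ :=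
  Module.finrank ℝ (Submodule.span ℝ (Set.range v))

/-
The difference of two Lagrangians is `Φ = ∑ vᵢ cᵢ`, where `cᵢ` runs over the equality and active
inequality constraints and `v` is the difference of the multipliers (complementarity kills the
inactive ones); `∇Φ(x*) = vᵀ J(x*) = 0`. Along the line `x* + t d`, the function
`t ↦ vᵀ J(x* + t d) d = ∇Φ(x* + t d) d` has derivative `dᵀ ∇²Φ(x*) d` at `0`.
Fix vectors `X_j` such that the `J(x*) X_j` form a basis of the range of `J(x*)`. For small `t`
the vectors `J(x* + t d) X_j` stay independent, so by constancy of the rank they still span the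
range of `J(x* + t d)`, and `J(x* + t d) d = ∑ c_j(t) J(x* + t d) X_j` with coefficients
continuous in `t` and vanishing at `0` (as `J(x*) d = 0`). Each `vᵀ J(x* + t d) X_j` is
differentiable and vanishes at `0`, so `vᵀ J(x* + t d) d = o(t)` and `dᵀ ∇²Φ(x*) d = 0`.
-/

open Filter Topology

theorem Matrix.isUnit_transpose_mul_self_iff {ι κ R : Type*} [Fintype ι] [Fintype κ]
    [DecidableEq κ] [Field R] [LinearOrder R] [IsStrictOrderedRing R] (A : Matrix ι κ R) :
    IsUnit (Aᵀ * A) ↔ Function.Injective A.mulVec := by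
  rw [← mulVec_injective_iff_isUnit, ← coe_mulVecLin, ← coe_mulVecLin, ← LinearMap.ker_eq_bot,
    ← LinearMap.ker_eq_bot, ker_mulVecLin_transpose_mul_self]

theorem Matrix.range_mulVecLin_mul_eq_of_rank_le {ι κ ρ R : Type*} [Fintype κ] [Fintype ρ]
    [Field R] (A : Matrix ι κ R) (B : Matrix κ ρ R) (h : A.rank ≤ (A * B).rank) :
    LinearMap.range (A * B).mulVecLin = LinearMap.range A.mulVecLin := by
  refine Submodule.eq_of_le_of_finrank_le ?_ h
  rw [Matrix.mulVecLin_mul]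
  exact LinearMap.range_comp_le_range _ _

theorem Matrix.exists_mulVec_eq_mul_mulVec_of_rank_eventually_eq {T ι κ : Type*}
    [TopologicalSpace T] [Fintype ι] [Fintype κ] {M : T → Matrix ι κ ℝ} {t₀ : T}
    (hM : ContinuousAt M t₀) (hrank : ∀ᶠ t in 𝓝 t₀, (M t).rank = (M t₀).rank)
    {d : κ → ℝ} (hd : M t₀ *ᵥ d = 0) :
    ∃ (r : ℕ) (B : Matrix κ (Fin r) ℝ) (c : T → Fin r → ℝ), ContinuousAt c t₀ ∧ c t₀ = 0 ∧
      ∀ᶠ t in 𝓝 t₀, M t *ᵥ d = (M t * B) *ᵥ c t := by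
  set r := (M t₀).rank
  obtain ⟨b⟩ : Nonempty (Module.Basis (Fin r) ℝ (LinearMap.range (M t₀).mulVecLin)) :=
    ⟨Module.finBasis ℝ _⟩
  choose X hX using fun j => (b j).2
  let B : Matrix κ (Fin r) ℝ := Matrix.of fun k j => X j k
  let G : T → Matrix ι (Fin r) ℝ := fun t => M t * B
  let S : T → Matrix (Fin r) (Fin r) ℝ := fun t => (G t)ᵀ * G t
  have hG₀ : Function.Injective (G t₀).mulVec := by
    have hcol : (G t₀).col = fun j => (b j : ι → ℝ) := by
      ext j i
      simp only [← hX, Matrix.mulVecLin_apply]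
      rfl
    rw [Matrix.mulVec_injective_iff, hcol]
    exact b.linearIndependent.map' (LinearMap.range (M t₀).mulVecLin).subtype
      (Submodule.ker_subtype _)
  have hGc : ContinuousAt G t₀ := (continuous_id.matrix_mul continuous_const).continuousAt.comp hM
  have hSc : ContinuousAt S t₀ :=
    (continuous_id.matrix_transpose.matrix_mul continuous_id).continuousAt.comp hGc
  have hS₀ : IsUnit (S t₀) := (Matrix.isUnit_transpose_mul_self_iff _).2 hG₀
  have hS : ∀ᶠ t in 𝓝 t₀, IsUnit (S t) := by
    have hdet := (continuous_id.matrix_det.continuousAt.comp hSc).eventually_ne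
      ((Matrix.isUnit_iff_isUnit_det _).1 hS₀).ne_zero
    filter_upwards [hdet] with t ht
    exact (Matrix.isUnit_iff_isUnit_det _).2 (isUnit_iff_ne_zero.2 ht)
  -- The least-squares coefficients of `M t *ᵥ d` against the columns of `G t`: exact as soon as
  -- `G t` is injective, since its range then has dimension `r = rank (M t)`.
  refine ⟨r, B, fun t => (S t)⁻¹ *ᵥ ((G t)ᵀ *ᵥ (M t *ᵥ d)), ?_, by simp [hd], ?_⟩
  · have hinv : ContinuousAt (fun t => (S t)⁻¹) t₀ := by
      refine (continuousAt_matrix_inv _ ?_).comp hSc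
      rw [Ring.inverse_eq_inv']
      exact continuousAt_inv₀ ((Matrix.isUnit_iff_isUnit_det _).1 hS₀).ne_zero
    have hformula : Continuous fun q : Matrix (Fin r) (Fin r) ℝ × Matrix ι (Fin r) ℝ ×
        Matrix ι κ ℝ => q.1 *ᵥ (q.2.1ᵀ *ᵥ (q.2.2 *ᵥ d)) := by
      fun_prop
    exact hformula.continuousAt.comp (hinv.prodMk (hGc.prodMk hM))
  · filter_upwards [hrank, hS] with t ht hSt
    have hGinj : Function.Injective (G t).mulVec := (Matrix.isUnit_transpose_mul_self_iff _).1 hSt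
    have hrankG : (G t).rank = r := by
      rw [Matrix.rank, LinearMap.finrank_range_of_inj hGinj, Module.finrank_fin_fun]
    obtain ⟨c, hc⟩ : M t *ᵥ d ∈ LinearMap.range (G t).mulVecLin := by
      rw [Matrix.range_mulVecLin_mul_eq_of_rank_le _ _ (by rw [ht, hrankG])]
      exact ⟨d, rfl⟩
    rw [Matrix.mulVecLin_apply] at hc
    have hcoeff : (S t)⁻¹ *ᵥ ((G t)ᵀ *ᵥ (G t *ᵥ c)) = c := by
      rw [Matrix.mulVec_mulVec, Matrix.mulVec_mulVec, Matrix.mul_assoc]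
      change ((S t)⁻¹ * S t) *ᵥ c = c
      rw [Matrix.nonsing_inv_mul _ ((Matrix.isUnit_iff_isUnit_det _).1 hSt), Matrix.one_mulVec]
    calc M t *ᵥ d = G t *ᵥ c := hc.symm
      _ = G t *ᵥ ((S t)⁻¹ *ᵥ ((G t)ᵀ *ᵥ (G t *ᵥ c))) := by rw [hcoeff]
      _ = _ := by rw [hc]

theorem hasDerivAt_mul_of_apply_eq_zero {u a : ℝ → ℝ} {t₀ : ℝ} (hu : DifferentiableAt ℝ u t₀)
    (hu₀ : u t₀ = 0) (ha : ContinuousAt a t₀) (ha₀ : a t₀ = 0) :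
    HasDerivAt (fun t => u t * a t) 0 t₀ := by
  rw [hasDerivAt_iff_isLittleO]
  have hu' : u =O[𝓝 t₀] fun t => t - t₀ := by simpa [hu₀] using hu.hasDerivAt.isBigO_sub
  have ha' : a =o[𝓝 t₀] fun _ => (1 : ℝ) :=
    Asymptotics.isLittleO_one_iff ℝ |>.2 (by simpa [ha₀] using ha.tendsto)
  simpa [hu₀] using hu'.mul_isLittleO ha'

theorem hasDerivAt_dotProduct_mulVec_of_rank_eventually_eq {ι κ : Type*} [Fintype ι] [Fintype κ]
    {M : ℝ → Matrix ι κ ℝ} {t₀ : ℝ} (hM : ∀ i k, DifferentiableAt ℝ (fun t => M t i k) t₀)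
    (hrank : ∀ᶠ t in 𝓝 t₀, (M t).rank = (M t₀).rank) {v : ι → ℝ} (hv : v ᵥ* M t₀ = 0)
    {d : κ → ℝ} (hd : M t₀ *ᵥ d = 0) :
    HasDerivAt (fun t => v ⬝ᵥ (M t *ᵥ d)) 0 t₀ := by
  have hMc : ContinuousAt M t₀ :=
    continuousAt_pi.2 fun i => continuousAt_pi.2 fun k => (hM i k).continuousAt
  obtain ⟨r, B, c, hc, hc₀, hMd⟩ :=
    Matrix.exists_mulVec_eq_mul_mulVec_of_rank_eventually_eq hMc hrank hd
  have hu : ∀ j, DifferentiableAt ℝ (fun t => (v ᵥ* (M t * B)) j) t₀ := by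
    intro j
    simp only [Matrix.vecMul, dotProduct, Matrix.mul_apply]
    fun_prop
  have hu₀ : v ᵥ* (M t₀ * B) = 0 := by rw [← Matrix.vecMul_vecMul, hv, Matrix.zero_vecMul]
  have hprod : HasDerivAt (fun t => (v ᵥ* (M t * B)) ⬝ᵥ c t) 0 t₀ := by
    simpa [dotProduct] using HasDerivAt.fun_sum fun j _ => hasDerivAt_mul_of_apply_eq_zero (hu j)
      (congrFun hu₀ j) ((continuous_apply j).continuousAt.comp hc) (congrFun hc₀ j)
  refine hprod.congr_of_eventuallyEq ?_
  filter_upwards [hMd] with t ht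
  rw [ht, Matrix.dotProduct_mulVec]

section Calculus

variable {n : ℕ}

theorem hessQ_add {φ ψ : (Fin n → ℝ) → ℝ} {x : Fin n → ℝ} (hφ : ContDiffAt ℝ 2 φ x)
    (hψ : ContDiffAt ℝ 2 ψ x) (d : Fin n → ℝ) : hessQ (φ + ψ) x d = hessQ φ x d + hessQ ψ x d := by
  simp only [hessQ, iteratedFDeriv_add_apply hφ hψ, _root_.add_apply]

theorem hasDerivAt_fderiv_apply_line {φ : (Fin n → ℝ) → ℝ} (hφ : ContDiff ℝ 2 φ)
    (x d : Fin n → ℝ) :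
    HasDerivAt (fun t : ℝ => fderiv ℝ φ (x + t • d) d) (hessQ φ x d) 0 := by
  have hline : HasDerivAt (fun t : ℝ => x + t • d) d 0 := by
    simpa using ((hasDerivAt_id (0 : ℝ)).smul_const d).const_add x
  have hD : HasFDerivAt (fderiv ℝ φ) (fderiv ℝ (fderiv ℝ φ) x) (x + (0 : ℝ) • d) := by
    rw [zero_smul, add_zero]
    exact ((hφ.fderiv_right le_rfl).differentiable one_ne_zero x).hasFDerivAt
  have hcomp : HasDerivAt (fun t : ℝ => fderiv ℝ φ (x + t • d))
      (fderiv ℝ (fderiv ℝ φ) x d) 0 := hD.comp_hasDerivAt 0 hline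
  have hhess : hessQ φ x d = fderiv ℝ (fderiv ℝ φ) x d d := by
    simp [hessQ, iteratedFDeriv_two_apply]
  simpa [hhess] using hcomp.clm_apply (hasDerivAt_const 0 d)

def jacobian {ι : Type*} (c : ι → (Fin n → ℝ) → ℝ) (x : Fin n → ℝ) : Matrix ι (Fin n) ℝ :=
  Matrix.of fun i k => fderiv ℝ (c i) x (Pi.single k 1)

theorem jacobian_mulVec {ι : Type*} (c : ι → (Fin n → ℝ) → ℝ) (x w : Fin n → ℝ) :
    jacobian c x *ᵥ w = fun i => fderiv ℝ (c i) x w := by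
  ext i
  conv_rhs => rw [pi_eq_sum_univ' w]
  simp [Matrix.mulVec, dotProduct, jacobian, mul_comm]

theorem dotProduct_jacobian_mulVec {ι : Type*} [Fintype ι] {c : ι → (Fin n → ℝ) → ℝ}
    {x : Fin n → ℝ} (hc : ∀ i, DifferentiableAt ℝ (c i) x) (v : ι → ℝ) (w : Fin n → ℝ) :
    v ⬝ᵥ (jacobian c x *ᵥ w) = fderiv ℝ (fun y => ∑ i, v i * c i y) x w := by
  rw [jacobian_mulVec, (HasFDerivAt.fun_sum fun i _ => (hc i).hasFDerivAt.const_mul (v i)).fderiv]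
  simp [dotProduct]

theorem hessQ_eq_zero_of_rank_eventually_eq {ι : Type*} [Fintype ι]
    {c : ι → (Fin n → ℝ) → ℝ} (hc : ∀ i, ContDiff ℝ 2 (c i)) {x : Fin n → ℝ}
    (hrank : ∀ᶠ y in 𝓝 x, (jacobian c y).rank = (jacobian c x).rank) {v : ι → ℝ}
    (hv : fderiv ℝ (fun y => ∑ i, v i * c i y) x = 0) {d : Fin n → ℝ}
    (hd : ∀ i, fderiv ℝ (c i) x d = 0) :
    hessQ (fun y => ∑ i, v i * c i y) x d = 0 := by
  have hline : ContDiff ℝ 2 fun t : ℝ => x + t • d := by fun_prop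
  let M : ℝ → Matrix ι (Fin n) ℝ := fun t => jacobian c (x + t • d)
  have hM₀ : M 0 = jacobian c x := by simp [M]
  have hM : ∀ i k, DifferentiableAt ℝ (fun t => M t i k) 0 := fun i k =>
    ((((hc i).fderiv_right le_rfl).clm_apply contDiff_const).comp
      (hline.of_le one_le_two)).differentiable one_ne_zero 0
  have hrankM : ∀ᶠ t in 𝓝 (0 : ℝ), (M t).rank = (M 0).rank := by
    rw [hM₀]
    exact (by simpa using hline.continuous.tendsto 0 : Tendsto _ _ (𝓝 x)).eventually hrank
  have hvM : v ᵥ* M 0 = 0 := by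
    ext k
    rw [← dotProduct_single_one (v ᵥ* M 0), ← Matrix.dotProduct_mulVec, hM₀,
      dotProduct_jacobian_mulVec (fun i => (hc i).differentiable two_ne_zero x), hv]
    rfl
  have hdM : M 0 *ᵥ d = 0 := by
    rw [hM₀, jacobian_mulVec]
    exact funext hd
  have hderiv := hasDerivAt_dotProduct_mulVec_of_rank_eventually_eq hM hrankM hvM hdM
  have hΦ : ContDiff ℝ 2 fun y => ∑ i, v i * c i y :=
    ContDiff.sum fun i _ => contDiff_const.mul (hc i)
  refine (hasDerivAt_fderiv_apply_line hΦ x d).unique (hderiv.congr_of_eventuallyEq ?_)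
  exact Eventually.of_forall fun t =>
    (dotProduct_jacobian_mulVec (fun i => (hc i).differentiable two_ne_zero _) v d).symm

end Calculus

section NLP

variable {n m p : ℕ} {f : (Fin n → ℝ) → ℝ} {h : Fin m → (Fin n → ℝ) → ℝ}
  {g : Fin p → (Fin n → ℝ) → ℝ} {xs : Fin n → ℝ}

def activeConstr (h : Fin m → (Fin n → ℝ) → ℝ) (g : Fin p → (Fin n → ℝ) → ℝ)
    (xs : Fin n → ℝ) : Fin m ⊕ {j : Fin p // g j xs = 0} → (Fin n → ℝ) → ℝ :=
  Sum.elim h fun j => g j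

theorem Jac_eq_jacobian : Jac h g xs = jacobian (activeConstr h g xs) := by
  funext x
  ext (i | j) k <;> rfl

theorem sum_active_eq_sum {ν : Fin p → ℝ} (hν : ∀ j, ν j * g j xs = 0) (x : Fin n → ℝ) :
    ∑ j : {j // g j xs = 0}, ν j * g j x = ∑ j, ν j * g j x := by
  rw [← Fintype.sum_subtype_add_sum_subtype (fun j => g j xs = 0), left_eq_add]
  refine Finset.sum_eq_zero fun j _ => ?_
  rw [(mul_eq_zero.1 (hν j)).resolve_right j.2, zero_mul]

theorem Lagr_eq_add_of_complementary {lam lam' : Fin m → ℝ} {mu mu' : Fin p → ℝ}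
    (hmu : ∀ j, mu j * g j xs = 0) (hmu' : ∀ j, mu' j * g j xs = 0) :
    Lagr f h g lam mu = Lagr f h g lam' mu' + fun x =>
      ∑ i, Sum.elim (lam - lam') (fun j : {j // g j xs = 0} => mu j - mu' j) i *
        activeConstr h g xs i x := by
  ext x
  simp only [Lagr, Pi.add_apply, Fintype.sum_sum_type, activeConstr, Sum.elim_inl, Sum.elim_inr,
    Pi.sub_apply, sub_mul, Finset.sum_sub_distrib, sum_active_eq_sum hmu, sum_active_eq_sum hmu']
  ring

theorem contDiff_Lagr {k : WithTop ℕ∞} (hf : ContDiff ℝ k f) (hh : ∀ i, ContDiff ℝ k (h i))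
    (hg : ∀ j, ContDiff ℝ k (g j)) (lam : Fin m → ℝ) (mu : Fin p → ℝ) :
    ContDiff ℝ k (Lagr f h g lam mu) :=
  (hf.add (ContDiff.sum fun i _ => contDiff_const.mul (hh i))).add
    (ContDiff.sum fun j _ => contDiff_const.mul (hg j))

end NLP

theorem stmt11 {n m p : ℕ} (f : (Fin n → ℝ) → ℝ) (h : Fin m → (Fin n → ℝ) → ℝ)
    (g : Fin p → (Fin n → ℝ) → ℝ)
    (hf : ContDiff ℝ 2 f) (hh : ∀ i, ContDiff ℝ 2 (h i)) (hg : ∀ j, ContDiff ℝ 2 (g j))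
    (xs : Fin n → ℝ)
    (hconst : ∀ᶠ x in nhds xs, (Jac h g xs x).rank = (Jac h g xs xs).rank) :
    ∀ (lam mu lam' mu'), IsLagMult f h g xs lam mu → IsLagMult f h g xs lam' mu' →
      ∀ d, critSub h g xs d →
        hessQ (Lagr f h g lam mu) xs d = hessQ (Lagr f h g lam' mu') xs d := by
  intro lam mu lam' mu' hLM hLM' d hd
  have hc : ∀ i, ContDiff ℝ 2 (activeConstr h g xs i) := Sum.rec hh fun j => hg j
  set v := Sum.elim (lam - lam') fun j : {j // g j xs = 0} => mu j - mu' j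
  have hΦ : ContDiff ℝ 2 fun x => ∑ i, v i * activeConstr h g xs i x :=
    ContDiff.sum fun i _ => contDiff_const.mul (hc i)
  have hL' := contDiff_Lagr hf hh hg lam' mu'
  have hsplit :=
    Lagr_eq_add_of_complementary (f := f) (h := h) (lam := lam) (lam' := lam') hLM.2.2 hLM'.2.2
  have hv : fderiv ℝ (fun x => ∑ i, v i * activeConstr h g xs i x) xs = 0 := by
    have hstat := hLM.2.1
    rw [hsplit, fderiv_add (hL'.differentiable two_ne_zero xs) (hΦ.differentiable two_ne_zero xs),
      hLM'.2.1, zero_add] at hstat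
    exact hstat
  have hdc : ∀ i, fderiv ℝ (activeConstr h g xs i) xs d = 0 := Sum.rec hd.1 fun j => hd.2 j j.2
  rw [hsplit, hessQ_add hL'.contDiffAt hΦ.contDiffAt, hessQ_eq_zero_of_rank_eventually_eq hc
    (by simpa only [Jac_eq_jacobian] using hconst) hv hdc, add_zero]

end
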